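/- Let (Δ_l)_{l≥1} be square-integrable real random variables on a probability space, and suppose there exists c < ∞ such that E[Δ_l²] ≤ c·2^{−l} for all l ≥ 1. Let β ∈ (0,1) and let L be a random level, independent of (Δ_l)_{l≥1}, with P(L = l) = (2^β − 1)·2^{−βl} for l ∈ {1,2,…}. Then Σ_{l≥1} E[Δ_l²]/P(L = l) ≤ c(2^β − 1)^{−1} Σ_{l≥1} 2^{(β−1)l} < ∞; consequently the estimator Z := Δ_L / P(L = L) satisfies E[Z²] < ∞ and E[Z] = Σ_{l≥1} E[Δ_l]. (This is the combination of the increment bound and the choice ℙ_L(l) ∝ 2^{−βl}, β ∈ (0,1), completing the proof of Proposition 1.) -/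

import Mathlib

open MeasureTheory ProbabilityTheory

/-! Condition on the level: by independence, `∫_{L = l} g(Δ_l) = P(L = l) E[g(Δ_l)]`.
Summing over `l` gives `E[Z] = ∑ E[Δ_l]` and `E[Z²] = ∑ E[Δ_l²]/P(L = l)`, and with
`P(L = l) ∝ 2^{-βl}` the bound `E[Δ_l²] ≤ c 2^{-l}` dominates the latter series by the
geometric series `∑ 2^{(β-1)l}`, which converges since `β < 1`. -/

theorem summable_rpow_mul_pnat {b a : ℝ} (hb : 1 < b) (ha : a < 0) :
    Summable fun l : ℕ+ => b ^ (a * ((l : ℕ) : ℝ)) := by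
  have hgeom : Summable fun n : ℕ => (b ^ a) ^ n :=
    summable_geometric_of_lt_one (by positivity) (Real.rpow_lt_one_of_one_lt_of_neg hb ha)
  refine (hgeom.comp_injective PNat.coe_injective).congr fun l => ?_
  rw [Function.comp_apply, ← Real.rpow_natCast, ← Real.rpow_mul (by positivity)]

theorem div_mul_two_rpow_neg_le {e c q β : ℝ} (n : ℕ) (hq : 0 < q)
    (he : e ≤ c * ((2 : ℝ) ^ n)⁻¹) :
    e / (q * (2 : ℝ) ^ (-(β * n))) ≤ c * q⁻¹ * (2 : ℝ) ^ ((β - 1) * n) := by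
  have hsplit : ((2 : ℝ) ^ n)⁻¹ = 2 ^ ((β - 1) * n) * 2 ^ (-(β * n)) := by
    rw [← Real.rpow_add two_pos, ← Real.rpow_natCast, ← Real.rpow_neg zero_le_two]
    ring_nf
  calc e / (q * (2 : ℝ) ^ (-(β * n)))
      ≤ c * ((2 : ℝ) ^ n)⁻¹ / (q * (2 : ℝ) ^ (-(β * n))) := by gcongr
    _ = c * q⁻¹ * (2 : ℝ) ^ ((β - 1) * n) := by
        rw [hsplit]
        field_simp

theorem setIntegral_preimage_comp_eq_mul_of_indepFun {Ω ι 𝓧 : Type*} [MeasurableSpace Ω]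
    [MeasurableSpace ι] [MeasurableSpace 𝓧] {μ : Measure Ω} {L : Ω → ι} {X : Ω → 𝓧}
    (hLX : IndepFun L X μ) (hL : Measurable L) (hX : AEMeasurable X μ) {g : 𝓧 → ℝ}
    (hg : AEStronglyMeasurable g (μ.map X)) {t : Set ι} (ht : MeasurableSet t) :
    ∫ ω in L ⁻¹' t, g (X ω) ∂μ = μ.real (L ⁻¹' t) * ∫ ω, g (X ω) ∂μ := by
  have hind : (L ⁻¹' t).indicator (fun ω => g (X ω))
      = fun ω => t.indicator 1 (L ω) * g (X ω) := by
    ext ω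
    by_cases hω : L ω ∈ t <;> simp [Set.indicator, hω]
  rw [← integral_indicator (hL ht), hind, hLX.integral_fun_comp_mul_comp hL.aemeasurable hX
    (measurable_one.indicator ht).aestronglyMeasurable hg]
  simp only [← Set.indicator_comp_right, Pi.one_comp]
  rw [integral_indicator_one (hL ht)]

theorem iUnion_preimage_singleton_eq_univ {α β : Type*} (f : α → β) :
    ⋃ b, f ⁻¹' {b} = Set.univ :=
  Set.eq_univ_of_forall fun a => Set.mem_iUnion.2 ⟨f a, rfl⟩

theorem integrable_of_integrable_sq {Ω : Type*} [MeasurableSpace Ω] {μ : Measure Ω}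
    [IsFiniteMeasure μ] {f : Ω → ℝ} (hf : AEStronglyMeasurable f μ)
    (hf2 : Integrable (fun ω => f ω ^ 2) μ) : Integrable f μ :=
  ((memLp_two_iff_integrable_sq hf).2 hf2).integrable one_le_two

noncomputable def singleTermEstimator {Ω ι : Type*} (Δ : ι → Ω → ℝ) (L : Ω → ι)
    (p : ι → ℝ) : Ω → ℝ :=
  fun ω => Δ (L ω) ω / p (L ω)

namespace singleTermEstimator

variable {Ω ι : Type*} {Δ : ι → Ω → ℝ} {L : Ω → ι} {p : ι → ℝ}

theorem eqOn_level (g : ℝ → ℝ) (l : ι) :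
    Set.EqOn (fun ω => g (singleTermEstimator Δ L p ω)) (fun ω => g (Δ l ω / p l))
      (L ⁻¹' {l}) :=
  fun ω (hω : L ω = l) => by simp only [singleTermEstimator, hω]

variable [MeasurableSpace Ω] {μ : Measure Ω} [MeasurableSpace ι] [MeasurableSingletonClass ι]

theorem measurable [Countable ι] (hL : Measurable L) (hΔ : ∀ l, Measurable (Δ l)) :
    Measurable (singleTermEstimator Δ L p) :=
  (measurable_from_prod_countable_left (f := fun q : Ω × ι => Δ q.2 q.1 / p q.2)
    fun l => (hΔ l).div_const (p l)).comp (measurable_id.prodMk hL)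

theorem setIntegral_sq_level (hL : Measurable L) (hΔ : ∀ l, Measurable (Δ l))
    (hLΔ : ∀ l, IndepFun L (Δ l) μ) (hp : ∀ l, p l = μ.real (L ⁻¹' {l})) (l : ι) :
    ∫ ω in L ⁻¹' {l}, (singleTermEstimator Δ L p ω) ^ 2 ∂μ
      = (∫ ω, Δ l ω ^ 2 ∂μ) / p l := by
  rw [setIntegral_congr_fun (hL (measurableSet_singleton l)) (eqOn_level (· ^ 2) l)]
  simp only [div_pow, integral_div]
  rw [setIntegral_preimage_comp_eq_mul_of_indepFun (hLΔ l) hL (hΔ l).aemeasurable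
    (continuous_pow 2).aestronglyMeasurable (measurableSet_singleton l), ← hp]
  rcases eq_or_ne (p l) 0 with h | h
  · simp [h]
  · field_simp

theorem integrable_sq [Countable ι] (hL : Measurable L) (hΔ : ∀ l, Measurable (Δ l))
    (hLΔ : ∀ l, IndepFun L (Δ l) μ) (hp : ∀ l, p l = μ.real (L ⁻¹' {l}))
    (hΔsq : ∀ l, Integrable (fun ω => Δ l ω ^ 2) μ)
    (hsum : Summable fun l => (∫ ω, Δ l ω ^ 2 ∂μ) / p l) :
    Integrable (fun ω => (singleTermEstimator Δ L p ω) ^ 2) μ := by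
  have hlevel : ∀ l, MeasurableSet (L ⁻¹' {l}) := fun l => hL (measurableSet_singleton l)
  have hon : ∀ l,
      IntegrableOn (fun ω => (singleTermEstimator Δ L p ω) ^ 2) (L ⁻¹' {l}) μ := by
    intro l
    refine IntegrableOn.congr_fun ?_ (eqOn_level (· ^ 2) l).symm (hlevel l)
    simpa only [div_pow] using ((hΔsq l).div_const (p l ^ 2)).integrableOn
  have hnorm : (fun l => ∫ ω in L ⁻¹' {l}, ‖(singleTermEstimator Δ L p ω) ^ 2‖ ∂μ)
      = fun l => (∫ ω, Δ l ω ^ 2 ∂μ) / p l := by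
    ext l
    simp only [norm_pow, Real.norm_eq_abs, sq_abs]
    exact setIntegral_sq_level hL hΔ hLΔ hp l
  rw [← integrableOn_univ, ← iUnion_preimage_singleton_eq_univ L]
  exact integrableOn_iUnion_of_summable_integral_norm hon (hnorm ▸ hsum)

theorem integral_eq_tsum [Countable ι] (hL : Measurable L) (hΔ : ∀ l, Measurable (Δ l))
    (hLΔ : ∀ l, IndepFun L (Δ l) μ) (hp : ∀ l, p l = μ.real (L ⁻¹' {l}))
    (hp0 : ∀ l, p l ≠ 0) (hZ : Integrable (singleTermEstimator Δ L p) μ) :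
    ∫ ω, singleTermEstimator Δ L p ω ∂μ = ∑' l, ∫ ω, Δ l ω ∂μ := by
  have hlevel : ∀ l, MeasurableSet (L ⁻¹' {l}) := fun l => hL (measurableSet_singleton l)
  rw [← setIntegral_univ, ← iUnion_preimage_singleton_eq_univ L,
    integral_iUnion hlevel (pairwise_disjoint_fiber L) hZ.integrableOn]
  refine tsum_congr fun l => ?_
  rw [setIntegral_congr_fun (hlevel l) (eqOn_level (fun x => x) l)]
  simp only [integral_div]
  rw [setIntegral_preimage_comp_eq_mul_of_indepFun (hLΔ l) hL (hΔ l).aemeasurable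
    measurable_id'.aestronglyMeasurable (measurableSet_singleton l), ← hp]
  field_simp [hp0 l]

end singleTermEstimator

/-- **Geometric level distribution completes the proof of Proposition 1.** Let `(Δ_l)_{l ≥ 1}` be
square-integrable real random variables with `E[Δ_l²] ≤ c 2^{-l}`, and let `L` be a random level,
independent of `(Δ_l)_{l ≥ 1}`, with `P(L = l) = (2^β - 1) 2^{-βl}` for `l ∈ {1, 2, …}`, where
`β ∈ (0,1)`. Then `∑_l E[Δ_l²]/P(L = l) ≤ c (2^β - 1)⁻¹ ∑_l 2^{(β-1)l} < ∞`; consequently the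
estimator `Z := Δ_L / P(L = L)` has `E[Z²] < ∞` and `E[Z] = ∑_l E[Δ_l]`. -/
theorem geometric_level_distribution_estimator
    {Ω : Type*} [MeasurableSpace Ω] (μ : Measure Ω) [IsProbabilityMeasure μ]
    (Δ : ℕ+ → Ω → ℝ)
    (hΔmeas : ∀ l, Measurable (Δ l))
    (hΔsq : ∀ l, Integrable (fun ω => (Δ l ω) ^ 2) μ)
    (c : ℝ)
    (hbd : ∀ l : ℕ+, ∫ ω, (Δ l ω) ^ 2 ∂μ ≤ c * ((2 : ℝ) ^ (l : ℕ))⁻¹)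
    (β : ℝ) (hβ0 : 0 < β) (hβ1 : β < 1)
    (L : Ω → ℕ+)
    (hLmeas : ∀ l : ℕ+, MeasurableSet (L ⁻¹' {l}))
    (p : ℕ+ → ℝ)
    (hp : ∀ l : ℕ+, p l = (μ (L ⁻¹' {l})).toReal)
    (hgeom : ∀ l : ℕ+, p l = ((2 : ℝ) ^ β - 1) * (2 : ℝ) ^ (-(β * ((l : ℕ) : ℝ))))
    -- L is independent of the σ-algebra generated by (Δ_l)_{l ≥ 1}
    (hindep : Indep (MeasurableSpace.comap L (⊤ : MeasurableSpace ℕ+))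
      (⨆ l : ℕ+, MeasurableSpace.comap (Δ l) (inferInstance : MeasurableSpace ℝ)) μ) :
    -- ∑_l E[Δ_l²]/P(L = l) ≤ c (2^β - 1)⁻¹ ∑_l 2^{(β-1)l} < ∞
    (Summable fun l : ℕ+ => (∫ ω, (Δ l ω) ^ 2 ∂μ) / p l) ∧
    (Summable fun l : ℕ+ => (2 : ℝ) ^ ((β - 1) * ((l : ℕ) : ℝ))) ∧
    (∑' l : ℕ+, (∫ ω, (Δ l ω) ^ 2 ∂μ) / p l)
      ≤ c * ((2 : ℝ) ^ β - 1)⁻¹ * ∑' l : ℕ+, (2 : ℝ) ^ ((β - 1) * ((l : ℕ) : ℝ)) ∧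
    -- consequently E[Z²] < ∞ and E[Z] = ∑_l E[Δ_l]
    Integrable (fun ω => (Δ (L ω) ω / p (L ω)) ^ 2) μ ∧
    Integrable (fun ω => Δ (L ω) ω / p (L ω)) μ ∧
    ∫ ω, Δ (L ω) ω / p (L ω) ∂μ = ∑' l : ℕ+, ∫ ω, Δ l ω ∂μ := by
  have hq : 0 < (2 : ℝ) ^ β - 1 := sub_pos.2 (Real.one_lt_rpow one_lt_two hβ0)
  have hp0 : ∀ l, 0 < p l := fun l => hgeom l ▸ by positivity
  have hgeo := summable_rpow_mul_pnat one_lt_two (sub_neg.2 hβ1)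
  have hterm : ∀ l : ℕ+, (∫ ω, Δ l ω ^ 2 ∂μ) / p l
      ≤ c * ((2 : ℝ) ^ β - 1)⁻¹ * (2 : ℝ) ^ ((β - 1) * ((l : ℕ) : ℝ)) := fun l =>
    hgeom l ▸ div_mul_two_rpow_neg_le l hq (hbd l)
  have hsum : Summable fun l : ℕ+ => (∫ ω, Δ l ω ^ 2 ∂μ) / p l :=
    (hgeo.mul_left _).of_nonneg_of_le
      (fun l => div_nonneg (integral_nonneg fun _ => sq_nonneg _) (hp0 l).le) hterm
  -- the discrete σ-algebra of `hindep`; Mathlib has no `MeasurableSpace ℕ+` instance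
  let : MeasurableSpace ℕ+ := ⊤
  have hL : Measurable L := measurable_to_countable' hLmeas
  have hLΔ : ∀ l, IndepFun L (Δ l) μ := fun l => (IndepFun_iff_Indep _ _ _).2
    (indep_of_indep_of_le_right hindep (le_iSup (fun l => MeasurableSpace.comap (Δ l) _) l))
  have hZ2 := singleTermEstimator.integrable_sq hL hΔmeas hLΔ hp hΔsq hsum
  have hZ := integrable_of_integrable_sq
    (singleTermEstimator.measurable hL hΔmeas).aestronglyMeasurable hZ2
  refine ⟨hsum, hgeo, ?_, hZ2, hZ,
    singleTermEstimator.integral_eq_tsum hL hΔmeas hLΔ hp (fun l => (hp0 l).ne') hZ⟩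
  rw [← tsum_mul_left]
  exact hsum.tsum_le_tsum hterm (hgeo.mul_left _)
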